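/- arXiv:2506.00301 — 3 statements merged into one kernel-verified Lean document; each statement's English description precedes it below -/
import Mathlib

section
/- If x is a solution to the problem of minimizing the number of nonzero entries subject to φx = y, and the number of nonzero entries of x is strictly less than spark(φ)/2, then x is the unique such minimizer, and moreover any other vector z with φz = y and ‖z‖₀ ≤ ‖x‖₀ equals x. -/
noncomputable def l0 {N : ℕ} (x : Fin N → ℝ) : ℕ := Nat.card {i : Fin N // x i ≠ 0}

noncomputable def spark {P N : ℕ} (φ : Matrix (Fin P) (Fin N) ℝ) : ℕ :=
  sInf {k | ∃ x : Fin N → ℝ, x ≠ 0 ∧ φ.mulVec x = 0 ∧ l0 x = k}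

lemma l0_eq_ncard {N : ℕ} (x : Fin N → ℝ) : l0 x = Set.ncard {i : Fin N | x i ≠ 0} := by
  rfl

lemma l0_sub_le {N : ℕ} (z x : Fin N → ℝ) : l0 (z - x) ≤ l0 z + l0 x := by
  simp only [l0_eq_ncard]
  refine le_trans (Set.ncard_le_ncard ?_ ((Set.finite_univ).subset (Set.subset_univ _)))
    (Set.ncard_union_le _ _)
  intro i hi
  by_contra h
  simp only [Set.mem_union, Set.mem_setOf_eq, not_or, not_not] at h
  simp [Pi.sub_apply, h.1, h.2] at hi

theorem stmt_0 {P N : ℕ} (hPN : P < N) (φ : Matrix (Fin P) (Fin N) ℝ)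
    (y : Fin P → ℝ) (x : Fin N → ℝ)
    (hx : φ.mulVec x = y)
    (hmin : ∀ z : Fin N → ℝ, φ.mulVec z = y → l0 x ≤ l0 z)
    (hsp : 2 * l0 x < spark φ) :
    ∀ z : Fin N → ℝ, φ.mulVec z = y → l0 z ≤ l0 x → z = x := by
  intro z hz hzx
  by_contra hne
  have hw : z - x ≠ 0 := sub_ne_zero.mpr hne
  have hker : φ.mulVec (z - x) = 0 := by
    rw [Matrix.mulVec_sub, hz, hx, sub_self]
  have hmem : l0 (z - x) ∈ {k | ∃ v : Fin N → ℝ, v ≠ 0 ∧ φ.mulVec v = 0 ∧ l0 v = k} :=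
    ⟨z - x, hw, hker, rfl⟩
  have hle : spark φ ≤ l0 (z - x) := Nat.sInf_le hmem
  have : l0 (z - x) ≤ 2 * l0 x := by
    calc l0 (z - x) ≤ l0 z + l0 x := l0_sub_le z x
    _ ≤ l0 x + l0 x := by omega
    _ = 2 * l0 x := by ring
  omega
end

section
/- Suppose φ satisfies the restricted isometry property with constant δ_{2s}(φ) < √2 − 1, and x is s-sparse. Then x is the unique solution to the ℓ₁-minimization problem: minimize ‖z‖₁ subject to φz = φx. -/
/-!
Let `h` be in the kernel of `φ` and `T` the support of `x`, so `#T ≤ s`. Cut the coordinates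
outside `T` into blocks `T₁, T₂, …` of `s` indices each, in order of decreasing `|h i|`. Every
entry on `T_{j+1}` is at most the average of `|h|` over `T_j`, whence
`∑_{j ≥ 2} ‖h_{T_j}‖₂ ≤ ‖h_{Tᶜ}‖₁ / √s`. As `φ h_{T ∪ T₁} = -∑_{j ≥ 2} φ h_{T_j}` and the RIP
bounds `|⟨φ u, φ v⟩|` by `δ ‖u‖₂ ‖v‖₂` for orthogonal sparse `u, v`, we get
`(1 - δ) ‖h_{T ∪ T₁}‖₂ ≤ √2 δ ∑_{j ≥ 2} ‖h_{T_j}‖₂`. Together with `‖h_T‖₁ ≤ √s ‖h_T‖₂` this is the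
null space property `(1 - δ) ‖h_T‖₁ ≤ √2 δ ‖h_{Tᶜ}‖₁`, and `√2 δ < 1 - δ` is exactly `δ < √2 - 1`.
Then for `z = x + h ≠ x` we have `‖z‖₁ ≥ ‖x‖₁ - ‖h_T‖₁ + ‖h_{Tᶜ}‖₁ > ‖x‖₁`.
-/

open Finset Matrix

section Sparsity

variable {N : ℕ}

lemma l0_eq_card (v : Fin N → ℝ) : l0 v = #{i | v i ≠ 0} := by
  simp [l0, Nat.card_eq_fintype_card, Fintype.card_subtype]

lemma l0_le_card {v : Fin N → ℝ} {S : Finset (Fin N)} (h : ∀ i, v i ≠ 0 → i ∈ S) :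
    l0 v ≤ #S := by
  rw [l0_eq_card]
  exact card_le_card fun i hi => h i (by simpa using hi)

lemma l0_le_add {u v w : Fin N → ℝ} (h : ∀ i, u i = 0 → v i = 0 → w i = 0) :
    l0 w ≤ l0 u + l0 v := by
  rw [l0_eq_card u, l0_eq_card v]
  refine (l0_le_card fun i hi => ?_).trans (card_union_le _ _)
  simp only [mem_union, mem_filter, mem_univ, true_and]
  by_contra! h'
  exact hi (h i h'.1 h'.2)

lemma l0_ite_le (p : Fin N → Prop) [DecidablePred p] (f : Fin N → ℝ) :
    l0 (fun i => if p i then f i else 0) ≤ #{i | p i} :=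
  l0_le_card fun i hi => mem_filter.mpr ⟨mem_univ i, by by_contra h; simp [h] at hi⟩

end Sparsity

section DotProduct

variable {n : Type*} [Fintype n]

lemma dotProduct_self_nonneg (v : n → ℝ) : 0 ≤ v ⬝ᵥ v :=
  sum_nonneg fun i _ => mul_self_nonneg (v i)

lemma dotProduct_eq_zero_of_disjoint {u v : n → ℝ} (h : ∀ i, u i = 0 ∨ v i = 0) : u ⬝ᵥ v = 0 :=
  sum_eq_zero fun i _ => by rcases h i with h | h <;> simp [h]

lemma dotProduct_self_ite (p : n → Prop) [DecidablePred p] (f : n → ℝ) :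
    (fun i => if p i then f i else 0) ⬝ᵥ (fun i => if p i then f i else 0) =
      ∑ i with p i, f i ^ 2 := by
  rw [dotProduct, sum_filter]
  exact sum_congr rfl fun i _ => by split_ifs <;> ring

end DotProduct

def NullSpaceProperty {m n : Type*} [Fintype n] [DecidableEq n] (φ : Matrix m n ℝ)
    (T : Finset n) : Prop :=
  ∀ h : n → ℝ, φ *ᵥ h = 0 → h ≠ 0 → ∑ i ∈ T, |h i| < ∑ i ∈ Tᶜ, |h i|

theorem NullSpaceProperty.sum_abs_lt {m n : Type*} [Fintype n] [DecidableEq n]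
    {φ : Matrix m n ℝ} {T : Finset n} (hφ : NullSpaceProperty φ T) {x z : n → ℝ}
    (hx : ∀ i ∉ T, x i = 0) (hz : φ *ᵥ z = φ *ᵥ x) (hzx : z ≠ x) :
    ∑ i, |x i| < ∑ i, |z i| := by
  have hlt := hφ (z - x) (by rw [mulVec_sub, hz, sub_self]) (sub_ne_zero.mpr hzx)
  have hT : ∑ i ∈ T, |x i| ≤ ∑ i ∈ T, |z i| + ∑ i ∈ T, |(z - x) i| := by
    rw [← sum_add_distrib]
    refine sum_le_sum fun i _ => ?_
    rw [Pi.sub_apply, abs_sub_comm]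
    linarith [abs_sub_abs_le_abs_sub (x i) (z i)]
  have hTc : ∑ i ∈ Tᶜ, |(z - x) i| = ∑ i ∈ Tᶜ, |z i| :=
    sum_congr rfl fun i hi => by simp [hx i (mem_compl.mp hi)]
  have hxT : ∑ i ∈ T, |x i| = ∑ i, |x i| :=
    sum_subset (subset_univ T) fun i _ hi => by simp [hx i hi]
  rw [← hxT, ← sum_add_sum_compl T]
  linarith

theorem sum_sqrt_sum_sq_fiber_succ_le {ι : Type*} [Fintype ι] (g : ι → ℝ) (β : ι → ℕ) {s : ℕ}
    (hs : 0 < s) (hcard : ∀ j, #{i | β i = j} ≤ s)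
    (hβ : ∀ j p, β p = j + 1 → s * |g p| ≤ ∑ q with β q = j, |g q|) (J : Finset ℕ) :
    ∑ j ∈ J, √(∑ i with β i = j + 1, g i ^ 2) ≤ (∑ i, |g i|) / √s := by
  have hs' : (0 : ℝ) < s := by exact_mod_cast hs
  have hblock (j : ℕ) : √(∑ i with β i = j + 1, g i ^ 2) ≤ (∑ q with β q = j, |g q|) / √s := by
    set S := ∑ q with β q = j, |g q|
    have hS : 0 ≤ S := sum_nonneg fun _ _ => abs_nonneg _
    rw [Real.sqrt_le_iff, div_pow, Real.sq_sqrt hs'.le]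
    refine ⟨by positivity, ?_⟩
    calc ∑ i with β i = j + 1, g i ^ 2 ≤ ∑ i with β i = j + 1, (S / s) ^ 2 := by
          refine sum_le_sum fun i hi => ?_
          rw [← sq_abs]
          have := hβ j i (mem_filter.mp hi).2
          exact pow_le_pow_left₀ (abs_nonneg _) (by rw [le_div_iff₀ hs']; linarith) 2
      _ = #{i | β i = j + 1} * (S / s) ^ 2 := by rw [sum_const, nsmul_eq_mul]
      _ ≤ s * (S / s) ^ 2 := by gcongr; exact_mod_cast hcard _
      _ = S ^ 2 / s := by field_simp
  calc ∑ j ∈ J, √(∑ i with β i = j + 1, g i ^ 2) ≤ ∑ j ∈ J, (∑ q with β q = j, |g q|) / √s :=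
        sum_le_sum fun j _ => hblock j
    _ = (∑ j ∈ J, ∑ q with β q = j, |g q|) / √s := (sum_div ..).symm
    _ ≤ (∑ i, |g i|) / √s := by
        gcongr
        exact sum_fiberwise_le_sum_of_sum_fiber_nonneg fun _ _ => sum_nonneg fun _ _ => abs_nonneg _

theorem exists_decreasing_blocks {N s : ℕ} (g : Fin N → ℝ) (hs : 0 < s) :
    ∃ β : Fin N → ℕ, (∀ i, β i < N) ∧ (∀ j, #{i | β i = j} ≤ s) ∧
      ∀ j p, β p = j + 1 → s * |g p| ≤ ∑ q with β q = j, |g q| := by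
  -- `σ` lists the coordinates by decreasing `|g|`; block `j` is positions `[j s, j s + s)`.
  set σ := Tuple.sort fun i => -|g i|
  have hσ {p q : Fin N} (hpq : p ≤ q) : |g (σ q)| ≤ |g (σ p)| :=
    neg_le_neg_iff.mp (Tuple.monotone_sort (fun i => -|g i|) hpq)
  have hmem (i : Fin N) (j : ℕ) :
      (σ.symm i : ℕ) / s = j ↔ (σ.symm i : ℕ) ∈ Ico (j * s) (j * s + s) := by
    rw [Nat.div_eq_iff hs, mem_Ico]
    omega
  refine ⟨fun i => (σ.symm i : ℕ) / s, fun i => (Nat.div_le_self _ _).trans_lt (σ.symm i).isLt,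
    fun j => ?_, fun j p hp => ?_⟩
  · calc #{i | (σ.symm i : ℕ) / s = j} ≤ #(Ico (j * s) (j * s + s)) :=
          card_le_card_of_injOn (fun i => (σ.symm i : ℕ))
            (fun i hi => (hmem i j).mp (mem_filter.mp hi).2)
            (fun i _ i' _ h => σ.symm.injective (Fin.ext h))
      _ = s := by simp
  · have hp' := mem_Ico.mp ((hmem p (j + 1)).mp hp)
    have hfull : s ≤ #{q | (σ.symm q : ℕ) / s = j} := by
      calc s = #(Ico (j * s) (j * s + s)) := by simp
        _ ≤ _ := card_le_card_of_surjOn (fun i => (σ.symm i : ℕ)) fun m hm => ?_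
      have hm' := mem_Ico.mp hm
      have hmN : m < N := by have := (σ.symm p).isLt; rw [add_mul, one_mul] at hp'; omega
      refine ⟨σ ⟨m, hmN⟩, ?_, by simp⟩
      simpa [hmem] using hm
    have hle (q) (hq : q ∈ ({q | (σ.symm q : ℕ) / s = j} : Finset (Fin N))) : |g p| ≤ |g q| := by
      have : σ.symm q ≤ σ.symm p := (Nat.lt_of_div_lt_div (by
        rw [(mem_filter.mp hq).2]; simp only at hp; omega)).le
      simpa using hσ this
    calc (s : ℝ) * |g p| ≤ #{q | (σ.symm q : ℕ) / s = j} * |g p| := by gcongr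
      _ ≤ ∑ q with (σ.symm q : ℕ) / s = j, |g q| := by
          rw [← nsmul_eq_mul]; exact card_nsmul_le_sum _ _ _ hle

/-- `RestrictedIsometry φ t δ` says `δ_t(φ) ≤ δ`. -/
def RestrictedIsometry {m : Type*} [Fintype m] {N : ℕ} (φ : Matrix m (Fin N) ℝ) (t : ℕ) (δ : ℝ) :
    Prop :=
  ∀ z : Fin N → ℝ, l0 z ≤ t →
    (1 - δ) * (z ⬝ᵥ z) ≤ φ *ᵥ z ⬝ᵥ φ *ᵥ z ∧ φ *ᵥ z ⬝ᵥ φ *ᵥ z ≤ (1 + δ) * (z ⬝ᵥ z)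

namespace RestrictedIsometry

variable {m : Type*} [Fintype m] {N t : ℕ} {φ : Matrix m (Fin N) ℝ} {δ : ℝ}

/-- Polarization applied to `‖v‖ u ± ‖u‖ v`, whose squared norms are both `2 ‖u‖² ‖v‖²`. -/
theorem abs_dotProduct_mulVec_le (hφ : RestrictedIsometry φ t δ) {u v : Fin N → ℝ}
    (huv : u ⬝ᵥ v = 0) (ht : l0 u + l0 v ≤ t) :
    |φ *ᵥ u ⬝ᵥ φ *ᵥ v| ≤ δ * √(u ⬝ᵥ u) * √(v ⬝ᵥ v) := by
  set a := √(u ⬝ᵥ u)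
  set b := √(v ⬝ᵥ v)
  have ha : a ^ 2 = u ⬝ᵥ u := Real.sq_sqrt (dotProduct_self_nonneg u)
  have hb : b ^ 2 = v ⬝ᵥ v := Real.sq_sqrt (dotProduct_self_nonneg v)
  have hrip (c : ℝ) := hφ (b • u + c • v) ((l0_le_add fun i hu hv => by simp [hu, hv]).trans ht)
  have hnorm (c : ℝ) : (b • u + c • v) ⬝ᵥ (b • u + c • v) = b ^ 2 * a ^ 2 + c ^ 2 * b ^ 2 := by
    simp only [add_dotProduct, dotProduct_add, smul_dotProduct, dotProduct_smul, smul_eq_mul,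
      dotProduct_comm v u, huv, ← ha, ← hb]
    ring
  have himage (c : ℝ) : φ *ᵥ (b • u + c • v) ⬝ᵥ φ *ᵥ (b • u + c • v) =
      b ^ 2 * (φ *ᵥ u ⬝ᵥ φ *ᵥ u) + 2 * b * c * (φ *ᵥ u ⬝ᵥ φ *ᵥ v) + c ^ 2 * (φ *ᵥ v ⬝ᵥ φ *ᵥ v) := by
    simp only [mulVec_add, mulVec_smul, add_dotProduct, dotProduct_add, smul_dotProduct,
      dotProduct_smul, smul_eq_mul, dotProduct_comm (φ *ᵥ v)]
    ring
  have hplus := hrip a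
  have hminus := hrip (-a)
  rw [hnorm, himage] at hplus hminus
  have hab : a * b * |φ *ᵥ u ⬝ᵥ φ *ᵥ v| ≤ a * b * (δ * a * b) := by
    rcases abs_cases (φ *ᵥ u ⬝ᵥ φ *ᵥ v) with ⟨h, -⟩ | ⟨h, -⟩ <;> rw [h] <;> nlinarith
  rcases (mul_nonneg (Real.sqrt_nonneg _) (Real.sqrt_nonneg _) : 0 ≤ a * b).eq_or_lt with h0 | hpos
  · have hzero (w : Fin N → ℝ) (hw : √(w ⬝ᵥ w) = 0) : w = 0 :=
      dotProduct_self_eq_zero.mp ((Real.sqrt_eq_zero (dotProduct_self_nonneg w)).mp hw)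
    rw [mul_assoc, ← h0, mul_zero]
    rcases mul_eq_zero.mp h0.symm with hu | hv
    · simp [hzero u hu]
    · simp [hzero v hv]
  · nlinarith

theorem one_sub_mul_sqrt_le_sqrt_two_mul_sum {s : ℕ} (hδ : 0 ≤ δ)
    (hφ : RestrictedIsometry φ (2 * s) δ) {κ : Type*} {J : Finset κ} {u₀ u₁ : Fin N → ℝ}
    {v : κ → Fin N → ℝ} (hu₀ : l0 u₀ ≤ s) (hu₁ : l0 u₁ ≤ s) (hv : ∀ j ∈ J, l0 (v j) ≤ s)
    (h₀₁ : u₀ ⬝ᵥ u₁ = 0) (h₀ : ∀ j ∈ J, u₀ ⬝ᵥ v j = 0) (h₁ : ∀ j ∈ J, u₁ ⬝ᵥ v j = 0)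
    (hker : φ *ᵥ (u₀ + u₁ + ∑ j ∈ J, v j) = 0) :
    (1 - δ) * √(u₀ ⬝ᵥ u₀ + u₁ ⬝ᵥ u₁) ≤ √2 * δ * ∑ j ∈ J, √(v j ⬝ᵥ v j) := by
  set w := u₀ + u₁
  set C := ∑ j ∈ J, √(v j ⬝ᵥ v j)
  have hw : w ⬝ᵥ w = u₀ ⬝ᵥ u₀ + u₁ ⬝ᵥ u₁ := by
    simp only [w, add_dotProduct, dotProduct_add, dotProduct_comm u₁ u₀, h₀₁]
    ring
  rw [← hw]
  set r := √(w ⬝ᵥ w)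
  have hr : r ^ 2 = w ⬝ᵥ w := Real.sq_sqrt (dotProduct_self_nonneg w)
  have hlow : (1 - δ) * r ^ 2 ≤ φ *ᵥ w ⬝ᵥ φ *ᵥ w := by
    have hsparse : l0 w ≤ 2 * s :=
      (l0_le_add (u := u₀) (v := u₁) fun i h0 h1 => by simp [w, h0, h1]).trans (by omega)
    exact hr ▸ (hφ w hsparse).1
  have hφw : φ *ᵥ w = -∑ j ∈ J, φ *ᵥ v j := by
    rw [mulVec_add, mulVec_sum] at hker
    exact eq_neg_of_add_eq_zero_left hker
  have hcross (j) (hj : j ∈ J) : -(φ *ᵥ w ⬝ᵥ φ *ᵥ v j) ≤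
      δ * (√(u₀ ⬝ᵥ u₀) + √(u₁ ⬝ᵥ u₁)) * √(v j ⬝ᵥ v j) := by
    have b₀ := abs_le.mp (hφ.abs_dotProduct_mulVec_le (h₀ j hj) (by linarith [hv j hj]))
    have b₁ := abs_le.mp (hφ.abs_dotProduct_mulVec_le (h₁ j hj) (by linarith [hv j hj]))
    rw [mulVec_add, add_dotProduct]
    linarith [b₀.1, b₁.1]
  have hupper : φ *ᵥ w ⬝ᵥ φ *ᵥ w ≤ δ * (√(u₀ ⬝ᵥ u₀) + √(u₁ ⬝ᵥ u₁)) * C := by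
    nth_rewrite 2 [hφw]
    rw [dotProduct_neg, dotProduct_sum, ← sum_neg_distrib, mul_sum]
    exact sum_le_sum hcross
  have hpair : √(u₀ ⬝ᵥ u₀) + √(u₁ ⬝ᵥ u₁) ≤ √2 * r := by
    rw [← Real.sqrt_mul zero_le_two, Real.le_sqrt (by positivity)
      (mul_nonneg zero_le_two (dotProduct_self_nonneg w)), hw]
    nlinarith [sq_nonneg (√(u₀ ⬝ᵥ u₀) - √(u₁ ⬝ᵥ u₁)),
      Real.sq_sqrt (dotProduct_self_nonneg u₀), Real.sq_sqrt (dotProduct_self_nonneg u₁)]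
  have hC : 0 ≤ C := sum_nonneg fun j _ => Real.sqrt_nonneg _
  have hsq : (1 - δ) * r * r ≤ √2 * δ * C * r := by
    nlinarith [mul_le_mul_of_nonneg_right hpair (mul_nonneg hδ hC)]
  by_cases hr0 : r = 0
  · rw [hr0, mul_zero]
    positivity
  · exact le_of_mul_le_mul_right hsq ((Real.sqrt_nonneg _).lt_of_ne' hr0)

theorem one_sub_mul_sum_abs_le {s : ℕ} (hδ₀ : 0 ≤ δ) (hδ₁ : δ ≤ 1)
    (hφ : RestrictedIsometry φ (2 * s) δ) {T : Finset (Fin N)} (hT : #T ≤ s) {h : Fin N → ℝ}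
    (hh : φ *ᵥ h = 0) :
    (1 - δ) * ∑ i ∈ T, |h i| ≤ √2 * δ * ∑ i ∈ Tᶜ, |h i| := by
  rcases Nat.eq_zero_or_pos s with rfl | hs
  · rw [card_eq_zero.mp (Nat.le_zero.mp hT), sum_empty, mul_zero]
    exact mul_nonneg (by positivity) (sum_nonneg fun _ _ => abs_nonneg _)
  set g : Fin N → ℝ := fun i => if i ∉ T then h i else 0
  obtain ⟨β, hβN, hcard, hβ⟩ := exists_decreasing_blocks g hs
  set u : Fin N → ℝ := fun i => if i ∈ T then h i else 0
  -- `u = h_T`, `v 0 = h_{T₁}` and `v (j + 1) = h_{T_{j+2}}`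
  set v : ℕ → Fin N → ℝ := fun j i => if β i = j then g i else 0
  have hdecomp : u + v 0 + ∑ j ∈ range N, v (j + 1) = h := by
    ext i
    rw [add_assoc, add_comm (v 0), ← sum_range_succ' v, Pi.add_apply, Finset.sum_apply, sum_ite_eq]
    by_cases hi : i ∈ T <;> simp [u, g, hi, Nat.lt_succ_of_lt (hβN i)]
  have hu : l0 u ≤ s := (l0_ite_le _ _).trans (by simpa using hT)
  have hv (j : ℕ) : l0 (v j) ≤ s := (l0_ite_le _ _).trans (hcard j)
  have huv (j : ℕ) : u ⬝ᵥ v j = 0 :=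
    dotProduct_eq_zero_of_disjoint fun i => by by_cases hi : i ∈ T <;> simp [u, v, g, hi]
  have hvv (j : ℕ) : v 0 ⬝ᵥ v (j + 1) = 0 :=
    dotProduct_eq_zero_of_disjoint fun i => by by_cases hi : β i = 0 <;> simp [v, hi]
  have hhead := hφ.one_sub_mul_sqrt_le_sqrt_two_mul_sum hδ₀ hu (hv 0) (fun j _ => hv (j + 1))
    (huv 0) (fun j _ => huv (j + 1)) (fun j _ => hvv j) (hdecomp ▸ hh)
  have htail : ∑ j ∈ range N, √(v (j + 1) ⬝ᵥ v (j + 1)) ≤ (∑ i, |g i|) / √s := by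
    simpa only [v, dotProduct_self_ite] using sum_sqrt_sum_sq_fiber_succ_le g β hs hcard hβ _
  have hg : ∑ i, |g i| = ∑ i ∈ Tᶜ, |h i| := by
    simp [g, apply_ite, sum_ite, compl_eq_univ_sdiff, filter_not]
  have hT₁ : ∑ i ∈ T, |h i| ≤ √s * √(u ⬝ᵥ u + v 0 ⬝ᵥ v 0) := by
    have hu₂ : u ⬝ᵥ u = ∑ i ∈ T, |h i| ^ 2 := by
      simpa [u] using dotProduct_self_ite (· ∈ T) h
    rw [← Real.sqrt_mul (Nat.cast_nonneg s), Real.le_sqrt (sum_nonneg fun _ _ => abs_nonneg _)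
      (mul_nonneg (Nat.cast_nonneg s) (add_nonneg (dotProduct_self_nonneg u)
        (dotProduct_self_nonneg (v 0))))]
    calc (∑ i ∈ T, |h i|) ^ 2 ≤ #T * ∑ i ∈ T, |h i| ^ 2 := sq_sum_le_card_mul_sum_sq
      _ ≤ s * (u ⬝ᵥ u + v 0 ⬝ᵥ v 0) := by
        rw [← hu₂]
        exact mul_le_mul (by exact_mod_cast hT) (le_add_of_nonneg_right (dotProduct_self_nonneg _))
          (dotProduct_self_nonneg u) (Nat.cast_nonneg s)
  calc (1 - δ) * ∑ i ∈ T, |h i| ≤ (1 - δ) * (√s * √(u ⬝ᵥ u + v 0 ⬝ᵥ v 0)) := by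
        gcongr
    _ = √s * ((1 - δ) * √(u ⬝ᵥ u + v 0 ⬝ᵥ v 0)) := by ring
    _ ≤ √s * (√2 * δ * ((∑ i, |g i|) / √s)) :=
        mul_le_mul_of_nonneg_left (hhead.trans (by gcongr)) (Real.sqrt_nonneg _)
    _ = √2 * δ * ∑ i ∈ Tᶜ, |h i| := by
        rw [hg]
        field_simp

theorem nullSpaceProperty {s : ℕ} (hδ₀ : 0 ≤ δ) (hδ : δ < √2 - 1)
    (hφ : RestrictedIsometry φ (2 * s) δ) {T : Finset (Fin N)} (hT : #T ≤ s) :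
    NullSpaceProperty φ T := by
  intro h hh hne
  have h₂ : √2 ^ 2 = 2 := Real.sq_sqrt zero_le_two
  have hρ : √2 * δ < 1 - δ := by nlinarith [Real.sqrt_nonneg 2]
  have hcone := hφ.one_sub_mul_sum_abs_le hδ₀ (by nlinarith [Real.sqrt_nonneg 2]) hT hh
  obtain ⟨i, hi⟩ := Function.ne_iff.mp hne
  have hpos : 0 < ∑ i ∈ T, |h i| + ∑ i ∈ Tᶜ, |h i| := by
    rw [sum_add_sum_compl]
    exact (abs_pos.mpr hi).trans_le (single_le_sum (fun j _ => abs_nonneg (h j)) (mem_univ i))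
  by_contra! hle
  have hpos' : 0 < ∑ i ∈ T, |h i| := by linarith
  linarith [mul_lt_mul_of_pos_right hρ hpos',
    mul_le_mul_of_nonneg_left hle (by positivity : 0 ≤ √2 * δ)]

end RestrictedIsometry

theorem stmt_9 {P N : ℕ} (φ : Matrix (Fin P) (Fin N) ℝ) (s : ℕ) (δ : ℝ)
    (hδ0 : 0 ≤ δ) (hδ : δ < Real.sqrt 2 - 1)
    (hRIP : ∀ z : Fin N → ℝ, l0 z ≤ 2 * s →
      (1 - δ) * (∑ i, (z i) ^ 2) ≤ (∑ i, (φ.mulVec z i) ^ 2) ∧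
      (∑ i, (φ.mulVec z i) ^ 2) ≤ (1 + δ) * (∑ i, (z i) ^ 2))
    (x : Fin N → ℝ) (hx : l0 x ≤ s) :
    (∀ z : Fin N → ℝ, φ.mulVec z = φ.mulVec x → ∑ i, |x i| ≤ ∑ i, |z i|) ∧
    (∀ z : Fin N → ℝ, φ.mulVec z = φ.mulVec x → (∑ i, |z i|) ≤ (∑ i, |x i|) → z = x) := by
  have hφ : RestrictedIsometry φ (2 * s) δ := fun z hz => by
    simpa only [dotProduct, ← sq] using hRIP z hz
  have hnsp := hφ.nullSpaceProperty hδ0 hδ (T := {i | x i ≠ 0}) (l0_eq_card x ▸ hx)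
  have hxT (i : Fin N) (hi : i ∉ ({i | x i ≠ 0} : Finset (Fin N))) : x i = 0 := by simpa using hi
  refine ⟨fun z hz => ?_, fun z hz hle => ?_⟩
  · obtain rfl | hzx := eq_or_ne z x
    · exact le_rfl
    · exact (hnsp.sum_abs_lt hxT hz hzx).le
  · by_contra hzx
    exact (hnsp.sum_abs_lt hxT hz hzx).not_ge hle
end

section
/- If spark(φ) > 2s and both x and z are solutions of φw = y with ‖x‖₀ ≤ s and ‖z‖₀ ≤ s, then x = z; equivalently the map x ↦ φx restricted to the set of s-sparse vectors is injective if and only if the kernel of φ contains no nonzero 2s-sparse vector. -/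
/-!
If `φ x₁ = φ x₂` with `x₁ ≠ x₂` both `s`-sparse, then `x₁ - x₂` is a nonzero kernel vector of
support at most `2s`. Conversely, a nonzero kernel vector `v` of support at most `2s` splits as
`v₁ + v₂` with both parts `s`-sparse, and then `φ v₁ = φ (-v₂)` with `v₁ ≠ -v₂`.
The condition `2s < spark φ` rules out such `v`.
-/

section Sparse

variable {ι β : Type*} [Fintype ι] [DecidableEq β]

theorem hammingNorm_sub_le [AddGroup β] (x z : ι → β) :
    hammingNorm (x - z) ≤ hammingNorm x + hammingNorm z := by
  have hdist : hammingDist x z = hammingNorm (x - z) := by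
    simp_rw [hammingNorm, hammingDist, Pi.sub_apply, sub_ne_zero]
  simpa [hdist] using hammingDist_triangle x 0 z

theorem hammingNorm_neg [AddGroup β] (x : ι → β) : hammingNorm (-x) = hammingNorm x := by
  simp [hammingNorm]

theorem exists_add_eq_of_hammingNorm_le_add [AddZeroClass β] {v : ι → β} {s t : ℕ}
    (hv : hammingNorm v ≤ s + t) :
    ∃ v₁ v₂ : ι → β, v₁ + v₂ = v ∧ hammingNorm v₁ ≤ s ∧ hammingNorm v₂ ≤ t := by
  set T : Finset ι := {i | v i ≠ 0}
  classical
  obtain ⟨S, hST, hS⟩ := Finset.exists_subset_card_eq (min_le_right s T.card)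
  refine ⟨S.piecewise v 0, S.piecewise 0 v, ?_, ?_, ?_⟩
  · ext i
    by_cases hi : i ∈ S <;> simp [hi]
  · calc hammingNorm (S.piecewise v 0) ≤ S.card := by
          refine Finset.card_le_card fun i hi => ?_
          by_contra hiS
          simp [hiS] at hi
      _ ≤ s := hS ▸ min_le_left _ _
  · calc hammingNorm (S.piecewise 0 v) ≤ (T \ S).card := by
          refine Finset.card_le_card fun i hi => ?_
          by_cases hiS : i ∈ S <;> simp_all [T]
      _ ≤ t := by
          have : T.card ≤ s + t := hv
          rw [Finset.card_sdiff_of_subset hST, hS]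
          omega

theorem AddMonoidHom.injOn_hammingNorm_le_iff {γ : Type*} [AddGroup β] [AddGroup γ]
    (f : (ι → β) →+ γ) (s : ℕ) :
    Set.InjOn f {x | hammingNorm x ≤ s} ↔ ∀ v, v ≠ 0 → f v = 0 → 2 * s < hammingNorm v := by
  constructor
  · intro hinj v hv hfv
    by_contra! hvs
    obtain ⟨v₁, v₂, rfl, hv₁, hv₂⟩ := exists_add_eq_of_hammingNorm_le_add (hvs.trans_eq (two_mul s))
    have hf : f v₁ = f (-v₂) := by rw [map_neg, ← sub_eq_zero, sub_neg_eq_add, ← map_add, hfv]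
    have : v₁ = -v₂ := hinj hv₁ (by rwa [Set.mem_ofPred_eq, hammingNorm_neg]) hf
    exact hv (by rw [this, neg_add_cancel])
  · intro hker x₁ hx₁ x₂ hx₂ hf
    by_contra hne
    have := hker (x₁ - x₂) (sub_ne_zero.2 hne) (by rw [map_sub, hf, sub_self])
    have := hammingNorm_sub_le x₁ x₂
    simp only [Set.mem_ofPred_eq] at hx₁ hx₂
    omega

end Sparse

theorem l0_eq_hammingNorm {N : ℕ} (x : Fin N → ℝ) : l0 x = hammingNorm x := by
  rw [l0, Nat.card_eq_fintype_card, Fintype.card_subtype]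
  rfl

theorem spark_le_l0 {P N : ℕ} {φ : Matrix (Fin P) (Fin N) ℝ} {v : Fin N → ℝ} (hv : v ≠ 0)
    (hφv : φ.mulVec v = 0) : spark φ ≤ l0 v :=
  Nat.sInf_le ⟨v, hv, hφv, rfl⟩

theorem stmt_15 {P N : ℕ} (φ : Matrix (Fin P) (Fin N) ℝ) (s : ℕ) (y : Fin P → ℝ) :
    (2 * s < spark φ →
      ∀ x z : Fin N → ℝ, φ.mulVec x = y → φ.mulVec z = y →
        l0 x ≤ s → l0 z ≤ s → x = z) ∧
    ((∀ x₁ x₂ : Fin N → ℝ, l0 x₁ ≤ s → l0 x₂ ≤ s →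
        φ.mulVec x₁ = φ.mulVec x₂ → x₁ = x₂) ↔
      (∀ v : Fin N → ℝ, v ≠ 0 → φ.mulVec v = 0 → ¬ l0 v ≤ 2 * s)) := by
  have hinj := φ.mulVecLin.toAddMonoidHom.injOn_hammingNorm_le_iff s
  simp only [Set.InjOn, Set.mem_ofPred_eq, imp_forall_iff, LinearMap.toAddMonoidHom_coe,
    Matrix.mulVecLin_apply, ← l0_eq_hammingNorm, ← not_le] at hinj
  refine ⟨fun hspark x z hx hz hxs hzs => ?_, hinj⟩
  refine hinj.2 (fun v hv hφv => ?_) (x₁ := x) z hxs hzs (hx.trans hz.symm)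
  have := spark_le_l0 hv hφv
  omega
end
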